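/- Let Φ be a biholomorphic function on the unit disk with Φ(0) = 1, Re Φ > 0, Φ'(0) > 0, Φ''(0) ∈ ℝ, and 2Φ'(0) - 2Φ'(0)^2 ≤ Φ''(0) ≤ 6Φ'(0)^2 - 2Φ'(0). If g(z) = z + b_2 z^2 + b_3 z^3 + ... is analytic on U and z g'(z)/g(z) is subordinate to Φ, then |2 b_2^2 b_3 - 2 b_2^2 - b_3^2 + 1| ≤ 1 + 2Φ'(0)^2 + (Φ'(0)^2/4)(3Φ'(0) - Φ''(0)/(2Φ'(0)))(Φ''(0)/(2Φ'(0)) + Φ'(0)). -/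

import Mathlib

/-
The Schwarz function ω with z g'(z)/g(z) = Φ(ω(z)) gives g' = Φ(ω) · (g/z) near 0, and comparing
Taylor coefficients yields b₂ = Φ'(0) ω'(0) and 4 b₃ = Φ''(0) ω'(0)² + Φ'(0) ω''(0) + 2 b₂².
The determinant factors as (1 - b₃)(1 + b₃ - 2 b₂²). With c = ω'(0), w = ω''(0)/2 and
t = Φ''(0)/(2 Φ'(0)), both b₃ and b₃ - 2 b₂² have the form Φ'(0)/2 · (w + μ c²), with μ = t + Φ'(0)
and μ = t - 3 Φ'(0) respectively; the two-sided bound on Φ''(0) says exactly that |μ| ≥ 1 in both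
cases. The Schwarz–Pick lemma applied to ω(z)/z gives |w| ≤ 1 - |c|², hence
|w + μ c²| ≤ max 1 |μ|.
-/

open Complex Metric Set Filter Topology ComplexConjugate FormalMultilinearSeries
open scoped NNReal Nat

lemma Complex.norm_sub_le_norm_one_sub_conj_mul {a z : ℂ} (ha : ‖a‖ ≤ 1) (hz : ‖z‖ ≤ 1) :
    ‖z - a‖ ≤ ‖1 - conj a * z‖ := by
  have key : ‖1 - conj a * z‖ ^ 2 - ‖z - a‖ ^ 2 = (1 - ‖a‖ ^ 2) * (1 - ‖z‖ ^ 2) := by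
    simp only [Complex.sq_norm, Complex.normSq_apply, sub_re, sub_im, mul_re, mul_im, one_re,
      one_im, conj_re, conj_im]
    ring
  refine (sq_le_sq₀ (norm_nonneg _) (norm_nonneg _)).mp ?_
  nlinarith [mul_nonneg (sub_nonneg.mpr (pow_le_one₀ (n := 2) (norm_nonneg a) ha))
    (sub_nonneg.mpr (pow_le_one₀ (n := 2) (norm_nonneg z) hz))]

theorem Complex.norm_deriv_le_one_sub_sq_of_mapsTo_ball {h : ℂ → ℂ}
    (hd : DifferentiableOn ℂ h (ball 0 1)) (hm : MapsTo h (ball 0 1) (closedBall 0 1)) :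
    ‖deriv h 0‖ ≤ 1 - ‖h 0‖ ^ 2 := by
  have hB0 : ball (0 : ℂ) 1 ∈ 𝓝 0 := ball_mem_nhds _ one_pos
  have hnorm : ∀ z ∈ ball (0 : ℂ) 1, ‖h z‖ ≤ 1 := fun z hz => mem_closedBall_zero_iff.mp (hm hz)
  rcases (hnorm 0 (mem_ball_self one_pos)).eq_or_lt with ha | ha
  · have hmax : IsLocalMax (norm ∘ h) 0 :=
      Filter.eventually_of_mem hB0 fun z hz => (hnorm z hz).trans ha.ge
    have hconst : h =ᶠ[𝓝 0] fun _ => h 0 := eventually_eq_of_isLocalMax_norm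
      (Filter.eventually_of_mem hB0 fun z hz => hd.differentiableAt (isOpen_ball.mem_nhds hz)) hmax
    rw [hconst.deriv_eq, deriv_const, ha]
    norm_num
  have hden : ∀ z ∈ ball (0 : ℂ) 1, 1 - conj (h 0) * h z ≠ 0 := by
    intro z hz
    have : ‖conj (h 0) * h z‖ < 1 := by
      rw [norm_mul, norm_conj]
      nlinarith [hnorm z hz, norm_nonneg (h 0), norm_nonneg (h z)]
    exact sub_ne_zero.mpr fun h1 => by simp [← h1] at this
  -- Compose `h` with the disc automorphism sending `h 0` to `0`.
  set ψ : ℂ → ℂ := fun z => (h z - h 0) / (1 - conj (h 0) * h z)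
  have hψ : MapsTo ψ (ball 0 1) (closedBall (ψ 0) 1) := by
    intro z hz
    simp only [ψ, sub_self, zero_div, mem_closedBall_zero_iff, norm_div]
    exact div_le_one_of_le₀ (norm_sub_le_norm_one_sub_conj_mul ha.le (hnorm z hz)) (norm_nonneg _)
  have hψd : DifferentiableOn ℂ ψ (ball 0 1) :=
    (hd.sub_const _).div ((hd.const_mul _).const_sub 1) hden
  have hh0 : HasDerivAt h (deriv h 0) 0 := (hd.differentiableAt hB0).hasDerivAt
  have hψ0 : HasDerivAt ψ (deriv h 0 / (1 - ‖h 0‖ ^ 2 : ℝ)) 0 := by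
    refine ((hh0.sub_const (h 0)).div ((hh0.const_mul (conj (h 0))).const_sub 1)
      (hden 0 (mem_ball_self one_pos))).congr_deriv ?_
    have hden0 : (1 : ℂ) - conj (h 0) * h 0 ≠ 0 := hden 0 (mem_ball_self one_pos)
    rw [conj_mul'] at hden0 ⊢
    push_cast
    field_simp
    ring
  have hpos : 0 < 1 - ‖h 0‖ ^ 2 := by nlinarith [norm_nonneg (h 0)]
  have := norm_deriv_le_one_of_mapsTo_ball hψd hψ one_pos
  rwa [hψ0.deriv, norm_div, norm_real, Real.norm_of_nonneg hpos.le, div_le_one hpos] at this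

theorem HasFPowerSeriesAt.iteratedDeriv_eq_factorial_smul_coeff {𝕜 F : Type*}
    [NontriviallyNormedField 𝕜] [NormedAddCommGroup F] [NormedSpace 𝕜 F] [CompleteSpace F]
    {f : 𝕜 → F} {p : FormalMultilinearSeries 𝕜 𝕜 F} {x : 𝕜} (h : HasFPowerSeriesAt f p x)
    (n : ℕ) : iteratedDeriv n f x = n ! • p.coeff n := by
  obtain ⟨r, hr⟩ := h
  rw [iteratedDeriv_eq_iteratedFDeriv, ← hr.factorial_smul 1 n]
  rfl

theorem Complex.hasFPowerSeriesOnBall_ofScalars_of_hasSum {b : ℕ → ℂ} {g : ℂ → ℂ} {r : ℝ≥0}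
    (h : ∀ z ∈ ball (0 : ℂ) r, HasSum (fun n => b n * z ^ n) (g z)) (hr : 0 < r) :
    HasFPowerSeriesOnBall g (ofScalars ℂ b) 0 r := by
  refine ⟨ENNReal.le_of_forall_nnreal_lt fun ρ hρ => ?_, by exact_mod_cast hr, fun {y} hy => ?_⟩
  · have hρ' : ((ρ : ℝ) : ℂ) ∈ ball (0 : ℂ) r := by
      simpa [abs_of_nonneg ρ.coe_nonneg] using hρ
    refine le_radius_of_summable _ ((h _ hρ').summable.norm.congr fun n => ?_)
    simp [abs_of_nonneg ρ.coe_nonneg]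
  · rw [Metric.eball_coe] at hy
    simpa [ofScalars_apply_eq, mul_comm] using h y hy

theorem Complex.norm_iteratedDeriv_two_le_of_mapsTo_ball {ω : ℂ → ℂ}
    (hd : DifferentiableOn ℂ ω (ball 0 1)) (h0 : ω 0 = 0)
    (hm : MapsTo ω (ball 0 1) (ball 0 1)) :
    ‖iteratedDeriv 2 ω 0 / 2‖ ≤ 1 - ‖deriv ω 0‖ ^ 2 := by
  have hB0 : ball (0 : ℂ) 1 ∈ 𝓝 0 := ball_mem_nhds _ one_pos
  obtain ⟨p, hp⟩ := hd.analyticAt hB0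
  have hmaps : MapsTo ω (ball 0 1) (closedBall (ω 0) 1) := by
    rw [h0]; exact hm.mono_right ball_subset_closedBall
  have key := norm_deriv_le_one_sub_sq_of_mapsTo_ball ((differentiableOn_dslope hB0).mpr hd)
    fun z hz => by simpa using norm_dslope_le_div_of_mapsTo_ball hd hmaps hz
  have hdslope : deriv (dslope ω 0) 0 = iteratedDeriv 2 ω 0 / 2 := by
    rw [← iteratedDeriv_one,
      hp.has_fpower_series_dslope_fslope.iteratedDeriv_eq_factorial_smul_coeff, coeff_fslope,
      hp.iteratedDeriv_eq_factorial_smul_coeff]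
    norm_num [Nat.factorial]
  rwa [hdslope, dslope_same] at key

theorem Complex.norm_iteratedDeriv_two_div_two_add_mul_sq_le {ω : ℂ → ℂ}
    (hd : DifferentiableOn ℂ ω (ball 0 1)) (h0 : ω 0 = 0)
    (hm : MapsTo ω (ball 0 1) (ball 0 1)) (μ : ℂ) :
    ‖iteratedDeriv 2 ω 0 / 2 + μ * deriv ω 0 ^ 2‖ ≤ max 1 ‖μ‖ := by
  have h1 : ‖deriv ω 0‖ ≤ 1 :=
    norm_deriv_le_one_of_mapsTo_ball hd (by rw [h0]; exact hm.mono_right ball_subset_closedBall)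
      one_pos
  have h2 := norm_iteratedDeriv_two_le_of_mapsTo_ball hd h0 hm
  have h1' : ‖deriv ω 0‖ ^ 2 ≤ 1 := pow_le_one₀ (norm_nonneg _) h1
  calc ‖iteratedDeriv 2 ω 0 / 2 + μ * deriv ω 0 ^ 2‖
      ≤ (1 - ‖deriv ω 0‖ ^ 2) + ‖μ‖ * ‖deriv ω 0‖ ^ 2 := by
        grw [norm_add_le, norm_mul, norm_pow, h2]
    _ ≤ max 1 ‖μ‖ := by
        rcases le_total 1 ‖μ‖ with hμ | hμ
        · rw [max_eq_right hμ]; nlinarith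
        · rw [max_eq_left hμ]; nlinarith [sq_nonneg ‖deriv ω 0‖]

theorem deriv_eventuallyEq_mul_dslope {g F : ℂ → ℂ} (hg : AnalyticAt ℂ g 0) (hg0 : g 0 = 0)
    (hg1 : deriv g 0 ≠ 0) (hF : ContinuousAt F 0)
    (heq : ∀ᶠ z in 𝓝[≠] 0, z * deriv g z / g z = F z) :
    deriv g =ᶠ[𝓝 0] F * dslope g 0 := by
  have hne : ∀ᶠ z in 𝓝[≠] 0, g z ≠ 0 := by
    refine hg.eventually_eq_zero_or_eventually_ne_zero.resolve_left fun hzero => hg1 ?_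
    simpa using Filter.EventuallyEq.deriv_eq (f₁ := g) (f := fun _ => 0) hzero
  have hk : ContinuousAt (dslope g 0) 0 := continuousAt_dslope_same.mpr hg.differentiableAt
  refine (hg.deriv.continuousAt.eventuallyEq_nhds_iff_eventuallyEq_nhdsNE (hF.mul hk)).mp ?_
  filter_upwards [heq, hne, self_mem_nhdsWithin] with z hz hgz (hz0 : z ≠ 0)
  have hsplit : g z = z * dslope g 0 z := by
    simpa [hg0] using (sub_smul_dslope g 0 z).symm
  rw [div_eq_iff hgz, hsplit] at hz
  exact mul_left_cancel₀ hz0 (by simp only [Pi.mul_apply]; linear_combination hz)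

theorem coeff_two_three_of_mul_deriv_div_eq {g F : ℂ → ℂ} {b : ℕ → ℂ}
    (hg : HasFPowerSeriesAt g (ofScalars ℂ b) 0) (hb0 : b 0 = 0) (hb1 : b 1 = 1)
    (hF : AnalyticAt ℂ F 0) (heq : ∀ᶠ z in 𝓝[≠] 0, z * deriv g z / g z = F z) :
    b 2 = deriv F 0 ∧ 4 * b 3 = iteratedDeriv 2 F 0 + 2 * b 2 ^ 2 := by
  have hk := hg.has_fpower_series_dslope_fslope
  have hg_coeff (n : ℕ) : iteratedDeriv n g 0 = n ! * b n := by
    simp [hg.iteratedDeriv_eq_factorial_smul_coeff]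
  have hk_coeff (n : ℕ) : iteratedDeriv n (dslope g 0) 0 = n ! * b (n + 1) := by
    simp [hk.iteratedDeriv_eq_factorial_smul_coeff, coeff_fslope]
  have hg0 : g 0 = 0 := by simpa [hb0] using hg_coeff 0
  have hg1 : deriv g 0 = 1 := by simpa [hb1] using hg_coeff 1
  have hrel := deriv_eventuallyEq_mul_dslope hg.analyticAt hg0 (by simp [hg1]) hF.continuousAt heq
  have hleibniz (n : ℕ) : iteratedDeriv (n + 1) g 0 = ∑ i ∈ Finset.range (n + 1),
      n.choose i * iteratedDeriv i F 0 * iteratedDeriv (n - i) (dslope g 0) 0 := by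
    rw [iteratedDeriv_succ', hrel.iteratedDeriv_eq, iteratedDeriv_mul hF.contDiffAt
      hk.analyticAt.contDiffAt]
  have h0 : 1 = F 0 := by simpa [hg_coeff, hk_coeff, hb1] using hleibniz 0
  have h1 : 2 * b 2 = F 0 * b 2 + deriv F 0 := by
    simpa [Finset.sum_range_succ, hg_coeff, hk_coeff, hb1] using hleibniz 1
  have h2 : 6 * b 3 = F 0 * (2 * b 3) + 2 * deriv F 0 * b 2 + iteratedDeriv 2 F 0 := by
    simpa [Finset.sum_range_succ, hg_coeff, hk_coeff, hb1, Nat.factorial] using hleibniz 2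
  have hb2 : b 2 = deriv F 0 := by linear_combination h1 - b 2 * h0
  exact ⟨hb2, by linear_combination h2 - 2 * b 3 * h0 - 2 * b 2 * hb2⟩

theorem norm_toeplitz_det_le {b₂ b₃ c w : ℂ} {β t : ℝ} (hβ : 0 < β) (ht₁ : 1 ≤ t + β)
    (ht₂ : 1 ≤ 3 * β - t) (hw : ∀ μ : ℂ, ‖w + μ * c ^ 2‖ ≤ max 1 ‖μ‖) (hb₂ : b₂ = β * c)
    (hb₃ : 4 * b₃ = 2 * β * t * c ^ 2 + 2 * β * w + 2 * b₂ ^ 2) :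
    ‖2 * b₂ ^ 2 * b₃ - 2 * b₂ ^ 2 - b₃ ^ 2 + 1‖ ≤
      1 + 2 * β ^ 2 + β ^ 2 / 4 * (3 * β - t) * (t + β) := by
  have hscaled (μ : ℝ) (hμ : 1 ≤ |μ|) : ‖(β / 2 : ℂ) * (w + μ * c ^ 2)‖ ≤ β / 2 * |μ| := by
    have := hw μ
    rw [Complex.norm_real, Real.norm_eq_abs, max_eq_right hμ] at this
    rw [norm_mul, show (β / 2 : ℂ) = ((β / 2 : ℝ) : ℂ) by push_cast; ring, Complex.norm_real,
      Real.norm_of_nonneg (by positivity)]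
    gcongr
  have hb₃_norm : ‖b₃‖ ≤ β / 2 * (t + β) := by
    have := hscaled (t + β) (by rw [abs_of_pos (by linarith)]; exact ht₁)
    rw [abs_of_pos (by linarith)] at this
    convert this using 2
    push_cast
    linear_combination hb₃ / 4 + (b₂ + β * c) / 2 * hb₂
  have hb₃₂_norm : ‖b₃ - 2 * b₂ ^ 2‖ ≤ β / 2 * (3 * β - t) := by
    have := hscaled (t - 3 * β) (by rw [abs_of_neg (by linarith)]; linarith)
    rw [abs_of_neg (by linarith), neg_sub] at this
    convert this using 2
    push_cast
    linear_combination hb₃ / 4 - (3 * b₂ + 3 * β * c) / 2 * hb₂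
  calc ‖2 * b₂ ^ 2 * b₃ - 2 * b₂ ^ 2 - b₃ ^ 2 + 1‖ = ‖1 - b₃‖ * ‖1 + (b₃ - 2 * b₂ ^ 2)‖ := by
        rw [← norm_mul]; ring_nf
    _ ≤ (1 + ‖b₃‖) * (1 + ‖b₃ - 2 * b₂ ^ 2‖) := by
        gcongr
        · exact (norm_sub_le _ _).trans_eq (by rw [norm_one])
        · exact (norm_add_le _ _).trans_eq (by rw [norm_one])
    _ ≤ (1 + β / 2 * (t + β)) * (1 + β / 2 * (3 * β - t)) := by gcongr
    _ = 1 + 2 * β ^ 2 + β ^ 2 / 4 * (3 * β - t) * (t + β) := by ring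

theorem stmt_9_general (Φ : ℂ → ℂ)
    (hΦa : AnalyticOn ℂ Φ (Metric.ball (0:ℂ) 1)) (hd1re : 0 < (deriv Φ 0).re) (hd1im : (deriv Φ 0).im = 0)
    (hd2im : (iteratedDeriv 2 Φ 0).im = 0)
    (hcond1 : 2 * (deriv Φ 0).re - 2 * (deriv Φ 0).re ^ 2 ≤ (iteratedDeriv 2 Φ 0).re)
    (hcond2 : (iteratedDeriv 2 Φ 0).re ≤ 6 * (deriv Φ 0).re ^ 2 - 2 * (deriv Φ 0).re)
    (g : ℂ → ℂ) (b : ℕ → ℂ)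
    (hb0 : b 0 = 0) (hb1 : b 1 = 1)
    (hb : ∀ z ∈ Metric.ball (0:ℂ) 1, HasSum (fun n => b n * z ^ n) (g z))
    (hsub : (∃ ω : ℂ → ℂ, AnalyticOn ℂ ω (Metric.ball (0:ℂ) 1) ∧ ω 0 = 0 ∧ (∀ z ∈ Metric.ball (0:ℂ) 1, ω z ∈ Metric.ball (0:ℂ) 1) ∧
          (∀ z ∈ Metric.ball (0:ℂ) 1, z ≠ 0 → z * deriv g z / g z = Φ (ω z)))) :
    ‖(2 * b 2 ^ 2 * b 3 - 2 * b 2 ^ 2 - b 3 ^ 2 + 1 : ℂ)‖ ≤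
      1 + 2 * (deriv Φ 0).re ^ 2 +
        (deriv Φ 0).re ^ 2 / 4 * (3 * (deriv Φ 0).re - (iteratedDeriv 2 Φ 0).re / (2 * (deriv Φ 0).re)) * ((iteratedDeriv 2 Φ 0).re / (2 * (deriv Φ 0).re) + (deriv Φ 0).re) := by
  obtain ⟨ω, hωa, hω0, hωm, hωeq⟩ := hsub
  have hB0 : ball (0 : ℂ) 1 ∈ 𝓝 0 := ball_mem_nhds _ one_pos
  have hω : AnalyticAt ℂ ω 0 := hωa.analyticAt hB0
  have hΦ : AnalyticAt ℂ Φ (ω 0) := by rw [hω0]; exact hΦa.analyticAt hB0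
  have heq : ∀ᶠ z in 𝓝[≠] 0, z * deriv g z / g z = (Φ ∘ ω) z := by
    filter_upwards [nhdsWithin_le_nhds hB0, self_mem_nhdsWithin] with z hz hz0
      using hωeq z hz hz0
  have hg : HasFPowerSeriesOnBall g (ofScalars ℂ b) 0 1 :=
    hasFPowerSeriesOnBall_ofScalars_of_hasSum (by simpa using hb) one_pos
  obtain ⟨hb₂, hb₃⟩ :=
    coeff_two_three_of_mul_deriv_div_eq hg.hasFPowerSeriesAt hb0 hb1 (hΦ.comp hω) heq
  rw [deriv_comp 0 hΦ.differentiableAt hω.differentiableAt, hω0] at hb₂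
  rw [iteratedDeriv_comp_two hΦ.contDiffAt hω.contDiffAt, hω0] at hb₃
  set β := (deriv Φ 0).re
  set t := (iteratedDeriv 2 Φ 0).re / (2 * β)
  have hΦ₁ : deriv Φ 0 = β := Complex.ext rfl (by simpa using hd1im)
  have hβ₂ : (iteratedDeriv 2 Φ 0).re = 2 * β * t := (mul_div_cancel₀ _ (by positivity)).symm
  have hΦ₂ : iteratedDeriv 2 Φ 0 = 2 * β * t := Complex.ext (by simp [hβ₂]) (by simpa using hd2im)
  rw [hβ₂] at hcond1 hcond2
  refine norm_toeplitz_det_le hd1re ?_ ?_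
    (norm_iteratedDeriv_two_div_two_add_mul_sq_le hωa.differentiableOn hω0 hωm)
    (by rw [hb₂, hΦ₁]) (by rw [hb₃, hΦ₁, hΦ₂]; ring)
  · nlinarith
  · nlinarith

theorem stmt_9 (Φ : ℂ → ℂ)
    (hΦa : AnalyticOn ℂ Φ (Metric.ball (0:ℂ) 1)) (hΦi : Set.InjOn Φ (Metric.ball (0:ℂ) 1)) (hΦ0 : Φ 0 = 1) (hΦre : ∀ z ∈ Metric.ball (0:ℂ) 1, 0 < (Φ z).re) (hd1re : 0 < (deriv Φ 0).re) (hd1im : (deriv Φ 0).im = 0)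
    (hd2im : (iteratedDeriv 2 Φ 0).im = 0)
    (hcond1 : 2 * (deriv Φ 0).re - 2 * (deriv Φ 0).re ^ 2 ≤ (iteratedDeriv 2 Φ 0).re)
    (hcond2 : (iteratedDeriv 2 Φ 0).re ≤ 6 * (deriv Φ 0).re ^ 2 - 2 * (deriv Φ 0).re)
    (g : ℂ → ℂ) (b : ℕ → ℂ)
    (hb0 : b 0 = 0) (hb1 : b 1 = 1)
    (hb : ∀ z ∈ Metric.ball (0:ℂ) 1, HasSum (fun n => b n * z ^ n) (g z))
    (hsub : (∃ ω : ℂ → ℂ, AnalyticOn ℂ ω (Metric.ball (0:ℂ) 1) ∧ ω 0 = 0 ∧ (∀ z ∈ Metric.ball (0:ℂ) 1, ω z ∈ Metric.ball (0:ℂ) 1) ∧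
          (∀ z ∈ Metric.ball (0:ℂ) 1, z ≠ 0 → z * deriv g z / g z = Φ (ω z)))) :
    ‖(2 * b 2 ^ 2 * b 3 - 2 * b 2 ^ 2 - b 3 ^ 2 + 1 : ℂ)‖ ≤
      1 + 2 * (deriv Φ 0).re ^ 2 +
        (deriv Φ 0).re ^ 2 / 4 * (3 * (deriv Φ 0).re - (iteratedDeriv 2 Φ 0).re / (2 * (deriv Φ 0).re)) * ((iteratedDeriv 2 Φ 0).re / (2 * (deriv Φ 0).re) + (deriv Φ 0).re) :=
  stmt_9_general Φ hΦa hd1re hd1im hd2im hcond1 hcond2 g b hb0 hb1 hb hsub
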